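/- Let t ≥ 2 and m ≥ 1 be integers, and let 1 ≤ r ≤ ⌊t/2⌋. Let λ^r be the partition whose β-set is ⋃_{j=1}^{r} { k·t + (t+1−2j) : 0 ≤ k ≤ m−1 }. Then λ^r is a (t, mt+1)-core partition with distinct parts, and its size equals −r²·(m²+2m)/2 + r·(m²t+mt+m)/2. -/

import Mathlib

/-- A partition: a finite weakly decreasing list of positive integers. -/
structure Partn where
  parts : List ℕ
  pos : ∀ p ∈ parts, 0 < p
  sorted : parts.Pairwise (· ≥ ·)

namespace Partn

/-- The size of a partition: the sum of its parts. -/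
def size (l : Partn) : ℕ := l.parts.sum

/-- The number of rows `k` (0-indexed) with `λ_k ≥ j` (the length of column `j`). -/
def colLen (l : Partn) (j : ℕ) : ℕ := (l.parts.filter (fun p => j ≤ p)).length

/-- The hook length of the box in row `i` (0-indexed) and column `j` (1-indexed):
`λ_i − j + #{k : λ_k ≥ j} − i + 1` (with 1-indexed rows). -/
def hook (l : Partn) (i j : ℕ) : ℕ :=
  (l.parts.getD i 0 - j) + (l.colLen j - (i + 1)) + 1

/-- A partition is a `t`-core if none of its hook lengths is divisible by `t`. -/
def IsCore (t : ℕ) (l : Partn) : Prop :=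
  ∀ i j : ℕ, i < l.parts.length → 1 ≤ j → j ≤ l.parts.getD i 0 → ¬ (t ∣ l.hook i j)

/-- A partition has distinct parts if its parts are strictly decreasing. -/
def DistinctParts (l : Partn) : Prop := l.parts.Pairwise (· > ·)

/-- The β-set of a partition: `{λ_i + ℓ − i : 1 ≤ i ≤ ℓ}` (1-indexed). -/
def betaSet (l : Partn) : Finset ℕ :=
  (Finset.range l.parts.length).image
    (fun i => l.parts.getD i 0 + (l.parts.length - 1 - i))

/-- `nFn t i l` is the number of elements of the β-set of `l` congruent to `i` mod `t`. -/
def nFn (t i : ℕ) (l : Partn) : ℕ :=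
  (l.betaSet.filter (fun x => x % t = i)).card

end Partn

/-!
The hook of the box `(i, j)` has length `β_i - b`, where `b = betaGap j` is a gap of the β-set.
Hence a β-set closed under `x ↦ x - t` (for `x ≥ t`) belongs to a `t`-core, and one bounded by
`n` to an `n`-core. The β-set of `λ^r` is a union of `r` progressions of difference `t` starting
in `[1, t - 1]` and ending below `m t`, so both criteria apply.
-/

open Finset

lemma Nat.mul_add_lt_mul {q m r u : ℕ} (hq : q < m) (hu : u < r) : q * r + u < m * r :=
  calc q * r + u < (q + 1) * r := by rw [Nat.add_one_mul]; omega
    _ ≤ m * r := Nat.mul_le_mul_right r hq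

lemma Nat.exists_mul_add_eq {i m r : ℕ} (hi : i < m * r) : ∃ q < m, ∃ u < r, q * r + u = i :=
  ⟨i / r, Nat.div_lt_of_lt_mul (by rwa [Nat.mul_comm] at hi),
    i % r, Nat.mod_lt _ (Nat.pos_of_mul_pos_left (Nat.zero_lt_of_lt hi)), Nat.div_add_mod' i r⟩

lemma Finset.sum_range_mul {M : Type*} [AddCommMonoid M] (f : ℕ → M) (m r : ℕ) :
    ∑ i ∈ range (m * r), f i = ∑ q ∈ range m, ∑ u ∈ range r, f (q * r + u) := by
  induction m with
  | zero => simp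
  | succ m ih => rw [Nat.add_one_mul, Finset.sum_range_add, ih, Finset.sum_range_succ]

lemma Finset.sum_range_natCast_mul_two {R : Type*} [CommRing R] (n : ℕ) :
    (∑ i ∈ range n, (i : R)) * 2 = n * (n - 1) := by
  induction n with
  | zero => simp
  | succ n ih => rw [sum_range_succ, add_mul, ih]; push_cast; ring

namespace Partn

variable (l : Partn)

lemma getD_antitone : Antitone (l.parts.getD · 0) := by
  intro a b hab
  by_cases hb : b < l.parts.length
  · simp only [List.getD_eq_getElem _ _ hb, List.getD_eq_getElem _ _ (hab.trans_lt hb)]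
    exact l.sorted.rel_get_of_le (a := ⟨a, hab.trans_lt hb⟩) (b := ⟨b, hb⟩) hab
  · simp only [List.getD_eq_default _ _ (not_lt.1 hb)]
    exact Nat.zero_le _

lemma colLen_le_length (j : ℕ) : l.colLen j ≤ l.parts.length :=
  List.length_filter_le _ _

lemma lt_colLen {i j : ℕ} (hi : i < l.parts.length) (hj : j ≤ l.parts.getD i 0) :
    i < l.colLen j := by
  have htake : (l.parts.take (i + 1)).filter (fun p => j ≤ p) = l.parts.take (i + 1) := by
    refine List.filter_eq_self.2 fun a ha => ?_
    obtain ⟨k, hk, rfl⟩ := List.mem_take_iff_getElem.1 ha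
    have : l.parts.getD i 0 ≤ l.parts.getD k 0 := l.getD_antitone (show k ≤ i by omega)
    rw [List.getD_eq_getElem _ _ (show k < l.parts.length by omega)] at this
    simpa using hj.trans this
  have := ((List.take_sublist (i + 1) l.parts).filter fun p => j ≤ p).length_le
  rw [htake, List.length_take] at this
  exact lt_of_lt_of_le (by omega) this

lemma colLen_le {j k : ℕ} (hk : l.parts.getD k 0 < j) : l.colLen j ≤ k := by
  have hdrop : (l.parts.drop k).filter (fun p => j ≤ p) = [] := by
    refine List.filter_eq_nil_iff.2 fun a ha => ?_
    obtain ⟨u, hu, rfl⟩ := List.mem_iff_getElem.1 ha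
    have : l.parts.getD (k + u) 0 ≤ l.parts.getD k 0 :=
      l.getD_antitone (show k ≤ k + u by omega)
    rw [List.getD_eq_getElem _ _ (by simp at hu; omega)] at this
    simpa using this.trans_lt hk
  rw [colLen, ← List.take_append_drop k l.parts, List.filter_append, hdrop, List.append_nil]
  exact (List.length_filter_le _ _).trans (List.length_take_le _ _)

def betaGap (j : ℕ) : ℕ := j + l.parts.length - 1 - l.colLen j

lemma getD_add_mem_betaSet {i : ℕ} (hi : i < l.parts.length) :
    l.parts.getD i 0 + (l.parts.length - 1 - i) ∈ l.betaSet :=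
  Finset.mem_image_of_mem _ (Finset.mem_range.2 hi)

lemma hook_add_betaGap {i j : ℕ} (hi : i < l.parts.length) (hj1 : 1 ≤ j)
    (hj : j ≤ l.parts.getD i 0) :
    l.hook i j + l.betaGap j = l.parts.getD i 0 + (l.parts.length - 1 - i) := by
  have := l.lt_colLen hi hj
  have := l.colLen_le_length j
  unfold hook betaGap
  omega

lemma betaGap_notMem_betaSet {j : ℕ} (hj : 1 ≤ j) : l.betaGap j ∉ l.betaSet := by
  intro hmem
  obtain ⟨k, hk, heq⟩ := Finset.mem_image.1 hmem
  rw [Finset.mem_range] at hk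
  have := l.colLen_le_length j
  rcases lt_or_ge (l.parts.getD k 0) j with h | h
  · have := l.colLen_le h
    unfold betaGap at heq
    omega
  · have := l.lt_colLen hk h
    unfold betaGap at heq
    omega

lemma one_le_hook (i j : ℕ) : 1 ≤ l.hook i j := Nat.le_add_left 1 _

theorem isCore_of_sub_mem_betaSet {t : ℕ}
    (h : ∀ x ∈ l.betaSet, t ≤ x → x - t ∈ l.betaSet) : l.IsCore t := by
  have hsub : ∀ d, ∀ x ∈ l.betaSet, t * d ≤ x → x - t * d ∈ l.betaSet := by
    intro d
    induction d with
    | zero => simp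
    | succ d ih =>
      intro x hx hle
      rw [Nat.mul_succ] at hle ⊢
      have := ih (x - t) (h x hx (by omega)) (by omega)
      rwa [Nat.sub_sub, Nat.add_comm] at this
  rintro i j hi hj1 hj ⟨d, hd⟩
  have hβ := l.hook_add_betaGap hi hj1 hj
  refine l.betaGap_notMem_betaSet hj1 ?_
  have := hsub d _ (l.getD_add_mem_betaSet hi) (by omega)
  rwa [show l.parts.getD i 0 + (l.parts.length - 1 - i) - t * d = l.betaGap j by omega] at this

theorem isCore_of_forall_lt {n : ℕ} (h : ∀ x ∈ l.betaSet, x < n) : l.IsCore n := by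
  intro i j hi hj1 hj hdvd
  have := l.hook_add_betaGap hi hj1 hj
  have := h _ (l.getD_add_mem_betaSet hi)
  have := Nat.le_of_dvd (l.one_le_hook i j) hdvd
  omega

lemma pairwise_gt_map_range {ℓ : ℕ} {p : ℕ → ℕ} (hp : StrictAntiOn p (Set.Iio ℓ)) :
    ((List.range ℓ).map p).Pairwise (· > ·) := by
  rw [List.pairwise_map]
  exact List.pairwise_lt_range.imp_of_mem fun ha hb hab =>
    hp (List.mem_range.1 ha) (List.mem_range.1 hb) hab

def ofStrictAntiOn (ℓ : ℕ) (p : ℕ → ℕ) (hp : StrictAntiOn p (Set.Iio ℓ))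
    (hpos : ∀ i < ℓ, 0 < p i) : Partn where
  parts := (List.range ℓ).map p
  pos := by simpa using hpos
  sorted := (pairwise_gt_map_range hp).imp le_of_lt

section ofStrictAntiOn

variable {ℓ : ℕ} {p : ℕ → ℕ} (hp : StrictAntiOn p (Set.Iio ℓ))
  (hpos : ∀ i < ℓ, 0 < p i)

lemma betaSet_ofStrictAntiOn :
    (ofStrictAntiOn ℓ p hp hpos).betaSet = (range ℓ).image fun i => p i + (ℓ - 1 - i) := by
  unfold betaSet
  simp only [ofStrictAntiOn, List.length_map, List.length_range]
  refine image_congr fun i hi => ?_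
  simp [mem_range.1 hi]

lemma size_ofStrictAntiOn : (ofStrictAntiOn ℓ p hp hpos).size = ∑ i ∈ range ℓ, p i := by
  simp [size, ofStrictAntiOn, Finset.sum_eq_multiset_sum, Multiset.range]

lemma distinctParts_ofStrictAntiOn : (ofStrictAntiOn ℓ p hp hpos).DistinctParts :=
  pairwise_gt_map_range hp

end ofStrictAntiOn

end Partn

def lambdaBetaSet (t m r : ℕ) : Finset ℕ :=
  (Icc 1 r).biUnion fun j => (range m).image fun k => k * t + (t + 1 - 2 * j)

section lambdaBetaSet

variable {t m r x : ℕ}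

lemma mem_lambdaBetaSet :
    x ∈ lambdaBetaSet t m r ↔
      ∃ j, (1 ≤ j ∧ j ≤ r) ∧ ∃ k < m, k * t + (t + 1 - 2 * j) = x := by
  simp [lambdaBetaSet]

lemma sub_mem_lambdaBetaSet (hx : x ∈ lambdaBetaSet t m r) (htx : t ≤ x) :
    x - t ∈ lambdaBetaSet t m r := by
  rcases Nat.eq_zero_or_pos t with rfl | ht
  · simpa using hx
  obtain ⟨j, hj, k, hk, rfl⟩ := mem_lambdaBetaSet.1 hx
  obtain _ | k := k
  · omega
  · refine mem_lambdaBetaSet.2 ⟨j, hj, k, by omega, ?_⟩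
    have := Nat.add_one_mul k t
    omega

lemma lt_of_mem_lambdaBetaSet (hx : x ∈ lambdaBetaSet t m r) : x < m * t + 1 := by
  obtain ⟨j, hj, k, hk, rfl⟩ := mem_lambdaBetaSet.1 hx
  have : (k + 1) * t ≤ m * t := Nat.mul_le_mul_right t hk
  rw [Nat.add_one_mul] at this
  omega

end lambdaBetaSet

/-- Row `i = q r + u` (`u < r`) of `λ^r` has length `(m - q) s - u`, where `s = t - r`. -/
def lambdaPart (m r s i : ℕ) : ℕ := (m - i / r) * s - i % r

section lambdaPart

variable {m r s : ℕ}

lemma lambdaPart_mul_add {q u : ℕ} (hu : u < r) :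
    lambdaPart m r s (q * r + u) = (m - q) * s - u := by
  rw [lambdaPart, Nat.mul_add_mod_of_lt hu, Nat.mul_comm q r,
    Nat.mul_add_div (Nat.zero_lt_of_lt hu), Nat.div_eq_of_lt hu, Nat.add_zero]

lemma lambdaPart_strictAntiOn (hrs : r ≤ s) :
    StrictAntiOn (lambdaPart m r s) (Set.Iio (m * r)) := by
  intro i hi i' hi' hii'
  obtain ⟨q, hq, u, hu, rfl⟩ := Nat.exists_mul_add_eq hi
  obtain ⟨q', hq', u', hu', rfl⟩ := Nat.exists_mul_add_eq hi'
  rw [lambdaPart_mul_add hu, lambdaPart_mul_add hu']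
  have hs : s ≤ (m - q') * s := Nat.le_mul_of_pos_left s (by omega)
  rcases lt_or_ge q q' with h | h
  · have : (m - q' + 1) * s ≤ (m - q) * s := Nat.mul_le_mul_right s (by omega)
    rw [Nat.add_one_mul] at this
    omega
  · obtain rfl : q = q' := by nlinarith
    omega

lemma lambdaPart_pos (hrs : r ≤ s) {i : ℕ} (hi : i < m * r) : 0 < lambdaPart m r s i := by
  obtain ⟨q, hq, u, hu, rfl⟩ := Nat.exists_mul_add_eq hi
  rw [lambdaPart_mul_add hu]
  have : s ≤ (m - q) * s := Nat.le_mul_of_pos_left s (by omega)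
  omega

lemma beta_lambdaPart_mul_add {q u : ℕ} (hrs : r ≤ s) (hq : q < m) (hu : u < r) :
    lambdaPart m r s (q * r + u) + (m * r - 1 - (q * r + u)) =
      (m - 1 - q) * (r + s) + (r + s + 1 - 2 * (u + 1)) := by
  obtain ⟨n, rfl⟩ : ∃ n, m = q + 1 + n := ⟨m - q - 1, by omega⟩
  rw [lambdaPart_mul_add hu, show q + 1 + n - q = n + 1 by omega,
    show q + 1 + n - 1 - q = n by omega]
  have := Nat.add_one_mul n s
  have := Nat.mul_add n r s
  have : (q + 1 + n) * r = q * r + r + n * r := by ring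
  omega

lemma image_beta_lambdaPart (hrs : r ≤ s) :
    (range (m * r)).image (fun i => lambdaPart m r s i + (m * r - 1 - i)) =
      lambdaBetaSet (r + s) m r := by
  ext x
  simp only [mem_image, mem_range, mem_lambdaBetaSet]
  constructor
  · rintro ⟨i, hi, rfl⟩
    obtain ⟨q, hq, u, hu, rfl⟩ := Nat.exists_mul_add_eq hi
    exact ⟨u + 1, by omega, m - 1 - q, by omega, by rw [beta_lambdaPart_mul_add hrs hq hu]⟩
  · rintro ⟨j, hj, k, hk, rfl⟩
    refine ⟨(m - 1 - k) * r + (j - 1), Nat.mul_add_lt_mul (by omega) (by omega), ?_⟩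
    rw [beta_lambdaPart_mul_add hrs (by omega) (by omega), show m - 1 - (m - 1 - k) = k by omega,
      show j - 1 + 1 = j by omega]

lemma sum_lambdaPart (hrs : r ≤ s) :
    (∑ i ∈ range (m * r), (lambdaPart m r s i : ℚ)) =
      r * s * m * (m + 1) / 2 - m * r * (r - 1) / 2 := by
  have hcast : ∀ q ∈ range m, ∀ u ∈ range r,
      (lambdaPart m r s (q * r + u) : ℚ) = (m - q) * s - u := by
    intro q hq u hu
    rw [mem_range] at hq hu
    have : s ≤ (m - q) * s := Nat.le_mul_of_pos_left s (by omega)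
    rw [lambdaPart_mul_add hu, Nat.cast_sub (by omega), Nat.cast_mul, Nat.cast_sub hq.le]
  rw [sum_range_mul, sum_congr rfl fun q hq => sum_congr rfl (hcast q hq)]
  simp only [sub_mul, mul_sub, sum_sub_distrib, sum_const, card_range, nsmul_eq_mul, ← sum_mul,
    ← mul_sum]
  linear_combination (-(r : ℚ) * s / 2) * sum_range_natCast_mul_two (R := ℚ) m
    - (m : ℚ) / 2 * sum_range_natCast_mul_two (R := ℚ) r

end lambdaPart

theorem lambda_r_t_mt_add_one_general (t m r : ℕ) (hr2 : r ≤ t / 2) :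
    ∃ lam : Partn,
      lam.betaSet = (Finset.Icc 1 r).biUnion
        (fun j => (Finset.range m).image (fun k => k * t + (t + 1 - 2 * j))) ∧
      lam.IsCore t ∧ lam.IsCore (m * t + 1) ∧ lam.DistinctParts ∧
      (lam.size : ℚ) = -(r : ℚ) ^ 2 * ((m : ℚ) ^ 2 + 2 * m) / 2
        + (r : ℚ) * ((m : ℚ) ^ 2 * t + m * t + m) / 2 := by
  obtain ⟨s, rfl⟩ : ∃ s, t = r + s := ⟨t - r, by omega⟩
  have hrs : r ≤ s := by omega
  let lam := Partn.ofStrictAntiOn (m * r) (lambdaPart m r s) (lambdaPart_strictAntiOn hrs)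
    fun _ => lambdaPart_pos hrs
  have hβ : lam.betaSet = lambdaBetaSet (r + s) m r := by
    rw [Partn.betaSet_ofStrictAntiOn, image_beta_lambdaPart hrs]
  refine ⟨lam, hβ, lam.isCore_of_sub_mem_betaSet (hβ ▸ fun _ => sub_mem_lambdaBetaSet),
    lam.isCore_of_forall_lt (hβ ▸ fun _ => lt_of_mem_lambdaBetaSet),
    Partn.distinctParts_ofStrictAntiOn _ _, ?_⟩
  rw [Partn.size_ofStrictAntiOn, Nat.cast_sum, sum_lambdaPart hrs]
  push_cast
  ring

/-- The partition `λ^r` with β-set `⋃_(j=1)^r {kt + (t+1−2j) : 0 ≤ k ≤ m−1}` is a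
`(t, mt+1)`-core partition with distinct parts of size
`−r²(m²+2m)/2 + r(m²t+mt+m)/2`. -/
theorem lambda_r_t_mt_add_one (t m r : ℕ) (ht : 2 ≤ t) (hm : 1 ≤ m)
    (hr1 : 1 ≤ r) (hr2 : r ≤ t / 2) :
    ∃ lam : Partn,
      lam.betaSet = (Finset.Icc 1 r).biUnion
        (fun j => (Finset.range m).image (fun k => k * t + (t + 1 - 2 * j))) ∧
      lam.IsCore t ∧ lam.IsCore (m * t + 1) ∧ lam.DistinctParts ∧
      (lam.size : ℚ) = -(r : ℚ) ^ 2 * ((m : ℚ) ^ 2 + 2 * m) / 2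
        + (r : ℚ) * ((m : ℚ) ^ 2 * t + m * t + m) / 2 :=
  lambda_r_t_mt_add_one_general t m r hr2
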